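/- arXiv:2010.10303 — 6 statements merged into one kernel-verified Lean document; each statement's English description precedes it below -/
import Mathlib

section
/- Define sequences t_n, f_n, u_n by t_1 = f_1 = u_1 = 1 and for n ≥ 2: t_n = Σ_{i=1}^{n-1} (t_i·t_{n-i} + f_i·t_{n-i} + f_i·f_{n-i} + f_i·u_{n-i} + u_i·t_{n-i}), f_n = Σ_{i=1}^{n-1} t_i·f_{n-i}, u_n = Σ_{i=1}^{n-1} (t_i·u_{n-i} + u_i·f_{n-i} + u_i·u_{n-i}). Then for all n ≥ 1, t_n + f_n + u_n = 3^n · C_n, where C_n = (1/n)·binomial(2n-2, n-1). -/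
/-- `C n = (1/n) * binom(2n-2, n-1)`, the number of bracketings of `n` terms. -/
noncomputable def catC (n : ℕ) : ℚ := (Nat.choose (2 * n - 2) (n - 1) : ℚ) / n

open Finset

lemma catC_succ (n : ℕ) : catC (n + 1) = catalan n := by
  have hc : ((n + 1 : ℕ) : ℚ) * catalan n = (2 * n).choose n := by
    exact_mod_cast succ_mul_catalan_eq_centralBinom n
  rw [catC, show 2 * (n + 1) - 2 = 2 * n by omega, Nat.add_sub_cancel, ← hc]
  field_simp

lemma sum_Icc_one_eq_sum_antidiagonal {M : Type*} [AddCommMonoid M] (g : ℕ → ℕ → M) (n : ℕ) :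
    ∑ i ∈ Icc 1 (n + 1), g i (n + 2 - i) = ∑ p ∈ antidiagonal n, g (p.1 + 1) (p.2 + 1) := by
  rw [Nat.sum_antidiagonal_eq_sum_range_succ (fun i j => g (i + 1) (j + 1)), range_eq_Ico,
    show Icc 1 (n + 1) = Ico (0 + 1) (n + 1 + 1) from rfl, ← sum_Ico_add']
  refine sum_congr rfl fun i hi => ?_
  congr 1
  simp only [mem_Ico] at hi
  omega

theorem eq_pow_mul_catalan_of_convolution {R : Type*} [CommSemiring R] (s : ℕ → R) (a : R)
    (h1 : s 1 = a) (hs : ∀ n, 2 ≤ n → s n = ∑ i ∈ Icc 1 (n - 1), s i * s (n - i)) (n : ℕ) :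
    s (n + 1) = a ^ (n + 1) * catalan n := by
  induction n using Nat.strong_induction_on with
  | _ n ih =>
    rcases n with _ | n
    · simp [h1]
    calc s (n + 2) = ∑ i ∈ Icc 1 (n + 1), s i * s (n + 2 - i) := hs (n + 2) (by omega)
      _ = ∑ p ∈ antidiagonal n, s (p.1 + 1) * s (p.2 + 1) :=
        sum_Icc_one_eq_sum_antidiagonal (fun i j => s i * s j) n
      _ = ∑ p ∈ antidiagonal n, a ^ (n + 2) * (catalan p.1 * catalan p.2 : ℕ) := by
        refine sum_congr rfl fun p hp => ?_
        have hsum := mem_antidiagonal.mp hp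
        rw [ih p.1 (by omega), ih p.2 (by omega), ← hsum]
        push_cast
        ring
      _ = a ^ (n + 2) * catalan (n + 1) := by
        rw [← mul_sum, catalan_succ', Nat.cast_sum]

/-- for the Kleene-implication row-count sequences `t, f, u`,
one has `t n + f n + u n = 3^n * C n` for all `n ≥ 1`. -/
theorem t_add_f_add_u_eq (t f u : ℕ → ℚ)
    (ht1 : t 1 = 1) (hf1 : f 1 = 1) (hu1 : u 1 = 1)
    (ht : ∀ n : ℕ, 2 ≤ n → t n = ∑ i ∈ Finset.Icc 1 (n - 1),
      (t i * t (n - i) + f i * t (n - i) + f i * f (n - i) +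
        f i * u (n - i) + u i * t (n - i)))
    (hf : ∀ n : ℕ, 2 ≤ n → f n = ∑ i ∈ Finset.Icc 1 (n - 1), t i * f (n - i))
    (hu : ∀ n : ℕ, 2 ≤ n → u n = ∑ i ∈ Finset.Icc 1 (n - 1),
      (t i * u (n - i) + u i * f (n - i) + u i * u (n - i))) :
    ∀ n : ℕ, 1 ≤ n → t n + f n + u n = (3 : ℚ) ^ n * catC n := by
  -- each of the nine products `x i * y (n - i)` occurs in exactly one of the three recurrences
  have hs : ∀ n, 2 ≤ n → t n + f n + u n =
      ∑ i ∈ Icc 1 (n - 1), (t i + f i + u i) * (t (n - i) + f (n - i) + u (n - i)) := by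
    intro n hn
    rw [ht n hn, hf n hn, hu n hn, ← sum_add_distrib, ← sum_add_distrib]
    exact sum_congr rfl fun i _ => by ring
  rintro n hn
  obtain ⟨m, rfl⟩ := Nat.exists_eq_add_of_le' hn
  rw [catC_succ]
  exact eq_pow_mul_catalan_of_convolution (fun n => t n + f n + u n) 3
    (by rw [ht1, hf1, hu1]; norm_num) hs m
end

section
/- Let u_n be defined by u_1 = 1 and u_n = Σ_{i=1}^{n-1} u_i · 3^{n-i} · C_{n-i} for n ≥ 2, where C_m = (1/m)·binomial(2m-2, m-1). Then u_n = (3^{n-1}/n) · binomial(2n-2, n-1) for all n ≥ 1. -/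
lemma catC_eq (n : ℕ) (hn : 1 ≤ n) : catC n = (catalan (n - 1) : ℚ) := by
  have h1 : 2 * n - 2 = 2 * (n - 1) := by omega
  have h2 : (2 * (n - 1)).choose (n - 1) = n * catalan (n - 1) := by
    have := succ_mul_catalan_eq_centralBinom (n - 1)
    rw [Nat.centralBinom, show n - 1 + 1 = n from by omega] at this
    exact this.symm
  have hn0 : (n : ℚ) ≠ 0 := by positivity
  rw [catC, h1, h2]
  push_cast
  field_simp

lemma catC_rec (n : ℕ) (hn : 2 ≤ n) :
    catC n = ∑ i ∈ Finset.Icc 1 (n - 1), catC i * catC (n - i) := by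
  have hsum : ∀ i ∈ Finset.Icc 1 (n - 1), catC i * catC (n - i)
      = ((catalan (i - 1) * catalan (n - i - 1) : ℕ) : ℚ) := by
    intro i hi
    simp only [Finset.mem_Icc] at hi
    rw [catC_eq i hi.1, catC_eq (n - i) (by omega)]
    push_cast
    ring
  rw [Finset.sum_congr rfl hsum, catC_eq n (by omega), ← Nat.cast_sum]
  congr 1
  have hc : n - 1 = (n - 2) + 1 := by omega
  rw [hc, catalan_succ]
  rw [← Finset.Ico_add_one_right_eq_Icc, Finset.sum_Ico_eq_sum_range]
  rw [Fin.sum_univ_eq_sum_range (fun i => catalan i * catalan (n - 2 - i))]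
  apply Finset.sum_congr (by congr 1)
  intro k _
  congr 1 <;> congr 1 <;> omega

/-- if `u 1 = 1` and `u n = Σ_{i=1}^{n-1} u i * 3^(n-i) * C (n-i)` for `n ≥ 2`,
then `u n = (3^(n-1)/n) * binom(2n-2, n-1)` for all `n ≥ 1`. -/
theorem u_closed_form (u : ℕ → ℚ) (hu1 : u 1 = 1)
    (hu : ∀ n : ℕ, 2 ≤ n →
      u n = ∑ i ∈ Finset.Icc 1 (n - 1), u i * (3 : ℚ) ^ (n - i) * catC (n - i)) :
    ∀ n : ℕ, 1 ≤ n →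
      u n = (3 : ℚ) ^ (n - 1) / n * (Nat.choose (2 * n - 2) (n - 1) : ℚ) := by
  have key : ∀ n : ℕ, 1 ≤ n → u n = (3 : ℚ) ^ (n - 1) * catC n := by
    intro n
    induction n using Nat.strong_induction_on with
    | _ n ih =>
      intro hn
      rcases eq_or_lt_of_le hn with h1 | h2
      · rw [← h1, hu1]
        simp [catC]
      · rw [hu n h2, catC_rec n h2, Finset.mul_sum]
        apply Finset.sum_congr rfl
        intro i hi
        simp only [Finset.mem_Icc] at hi
        rw [ih i (by omega) hi.1]
        rw [show (3 : ℚ) ^ (n - 1) = 3 ^ (i - 1) * 3 ^ (n - i) from by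
          rw [← pow_add]; congr 1; omega]
        ring
  intro n hn
  rw [key n hn, catC]
  ring
end

section
/- With t_n, f_n, u_n defined by the Kleene implication recurrences (t_1 = f_1 = u_1 = 1; t_n = Σ (t_i t_{n-i} + f_i t_{n-i} + f_i f_{n-i} + f_i u_{n-i} + u_i t_{n-i}), f_n = Σ t_i f_{n-i}, u_n = Σ (t_i u_{n-i} + u_i f_{n-i} + u_i u_{n-i}), sums over i = 1,...,n-1), we have u_n = (f_n + t_n)/2 for all n ≥ 1, equivalently f_n + t_n = 2·u_n. -/
/-- for the Kleene-implication row-count sequences `t, f, u`,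
one has `u n = (f n + t n) / 2`, equivalently `f n + t n = 2 * u n`, for all `n ≥ 1`. -/
theorem u_eq_avg_f_t (t f u : ℕ → ℚ)
    (ht1 : t 1 = 1) (hf1 : f 1 = 1) (hu1 : u 1 = 1)
    (ht : ∀ n : ℕ, 2 ≤ n → t n = ∑ i ∈ Finset.Icc 1 (n - 1),
      (t i * t (n - i) + f i * t (n - i) + f i * f (n - i) +
        f i * u (n - i) + u i * t (n - i)))
    (hf : ∀ n : ℕ, 2 ≤ n → f n = ∑ i ∈ Finset.Icc 1 (n - 1), t i * f (n - i))
    (hu : ∀ n : ℕ, 2 ≤ n → u n = ∑ i ∈ Finset.Icc 1 (n - 1),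
      (t i * u (n - i) + u i * f (n - i) + u i * u (n - i))) :
    ∀ n : ℕ, 1 ≤ n → u n = (f n + t n) / 2 ∧ f n + t n = 2 * u n := by
  have key : ∀ n : ℕ, 1 ≤ n → f n + t n = 2 * u n := by
    intro n
    induction n using Nat.strong_induction_on with
    | _ n ih =>
      intro hn
      rcases eq_or_lt_of_le hn with h | h2
      · rw [← h, ht1, hf1, hu1]; norm_num
      · have h2 : 2 ≤ n := h2
        -- reflection symmetry
        have hrefl : ∑ i ∈ Finset.Icc 1 (n - 1), f i * t (n - i)
            = ∑ i ∈ Finset.Icc 1 (n - 1), t i * f (n - i) := by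
          apply Finset.sum_nbij' (fun i => n - i) (fun i => n - i)
          · intro a ha
            simp only [Finset.mem_Icc] at *
            omega
          · intro a ha
            simp only [Finset.mem_Icc] at *
            omega
          · intro a ha
            simp only [Finset.mem_Icc] at ha
            omega
          · intro a ha
            simp only [Finset.mem_Icc] at ha
            omega
          · intro a ha
            simp only [Finset.mem_Icc] at ha
            have : n - (n - a) = a := by omega
            rw [this, mul_comm]
        have hterm : ∀ i ∈ Finset.Icc 1 (n - 1),
            t i * f (n - i)
            + (t i * t (n - i) + f i * t (n - i) + f i * f (n - i) +
                f i * u (n - i) + u i * t (n - i))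
            - 2 * (t i * u (n - i) + u i * f (n - i) + u i * u (n - i))
            = 3 / 2 * (f i * t (n - i) - t i * f (n - i)) := by
          intro i hi
          simp only [Finset.mem_Icc] at hi
          have h1 : f i + t i = 2 * u i := ih i (by omega) (by omega)
          have h2' : f (n - i) + t (n - i) = 2 * u (n - i) :=
            ih (n - i) (by omega) (by omega)
          have e1 : u i = (f i + t i) / 2 := by linarith
          have e2 : u (n - i) = (f (n - i) + t (n - i)) / 2 := by linarith
          rw [e1, e2]; ring
        have hsum : f n + t n - 2 * u n
            = ∑ i ∈ Finset.Icc 1 (n - 1),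
              (t i * f (n - i)
              + (t i * t (n - i) + f i * t (n - i) + f i * f (n - i) +
                  f i * u (n - i) + u i * t (n - i))
              - 2 * (t i * u (n - i) + u i * f (n - i) + u i * u (n - i))) := by
          rw [ht n h2, hf n h2, hu n h2, Finset.sum_sub_distrib,
            Finset.sum_add_distrib, Finset.mul_sum]
          simp only [Finset.sum_add_distrib]
        have : f n + t n - 2 * u n
            = ∑ i ∈ Finset.Icc 1 (n - 1),
              3 / 2 * (f i * t (n - i) - t i * f (n - i)) := by
          rw [hsum]; exact Finset.sum_congr rfl hterm
        rw [← Finset.mul_sum, Finset.sum_sub_distrib, hrefl, sub_self, mul_zero] at this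
        linarith
  intro n hn
  have := key n hn
  exact ⟨by linarith, this⟩
end

section
/- If formal power series U and G (with zero constant term) satisfy U = x + U·G and G = 3x + G², then U = G/3; equivalently, the generating function of u_n is U(x) = (1 − √(1 − 12x))/6. -/
/-!
Subtracting a third of `G = 3x + G²` from `U = x + U G` leaves `(U - G/3)(1 - G) = 0`,
and `1 - G` is invertible because `G` has no constant term.
-/

open PowerSeries

theorem eq_mul_of_eq_add_mul_of_eq_add_sq {A : Type*} [CommRing A] {x c U G : A}
    (hc : c * 3 = 1) (hG1 : IsUnit (1 - G)) (hU : U = x + U * G)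
    (hG : G = 3 * x + G ^ 2) : U = c * G := by
  have hprod : (U - c * G) * (1 - G) = 0 := by
    linear_combination hU - c * hG - x * hc
  exact sub_eq_zero.mp (hG1.mul_left_eq_zero.mp hprod)

theorem PowerSeries.isUnit_one_sub {R : Type*} [CommRing R] {φ : R⟦X⟧}
    (hφ : constantCoeff φ = 0) : IsUnit (1 - φ) := by
  simp [isUnit_iff_constantCoeff, hφ]

theorem U_eq_G_div_three_general (U G : PowerSeries ℚ)
    (hG0 : PowerSeries.constantCoeff G = 0)
    (hU : U = PowerSeries.X + U * G)
    (hG : G = 3 * PowerSeries.X + G ^ 2) :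
    U = PowerSeries.C (1 / 3 : ℚ) * G := by
  have hthird : C (1 / 3 : ℚ) * 3 = 1 := by
    rw [← map_ofNat C 3, ← map_mul]
    norm_num
  exact eq_mul_of_eq_add_mul_of_eq_add_sq hthird (isUnit_one_sub hG0) hU hG

/-- if formal power series `U`, `G` with zero constant term satisfy
`U = x + U*G` and `G = 3x + G²`, then `U = G/3`. -/
theorem U_eq_G_div_three (U G : PowerSeries ℚ)
    (hU0 : PowerSeries.constantCoeff U = 0)
    (hG0 : PowerSeries.constantCoeff G = 0)
    (hU : U = PowerSeries.X + U * G)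
    (hG : G = 3 * PowerSeries.X + G ^ 2) :
    U = PowerSeries.C (1 / 3 : ℚ) * G :=
  U_eq_G_div_three_general U G hG0 hU hG
end

section
/- If formal power series F, U satisfy F = 2FU − F² + x with F(0) = 0 and U = (1 − √(1−12x))/6, then F(x) = (−2 − √(1−12x) + √(5 + 24x + 4√(1−12x)))/6 (as real analytic functions on a neighborhood of 0, or as an identity of formal power series where the square roots denote the appropriate power series). -/
open Real

/-- if a continuous `F` with `F 0 = 0` satisfies `F = 2FU - F² + x`
on `[0, 1/12]`, where `U x = (1 - √(1-12x))/6`, then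
`F x = (-2 - √(1-12x) + √(5 + 24x + 4√(1-12x)))/6` there. -/
theorem F_closed_form (F : ℝ → ℝ)
    (hFc : ContinuousOn F (Set.Icc 0 (1 / 12)))
    (hF0 : F 0 = 0)
    (hF : ∀ x ∈ Set.Icc (0 : ℝ) (1 / 12),
      F x = 2 * F x * ((1 - Real.sqrt (1 - 12 * x)) / 6) - (F x) ^ 2 + x) :
    ∀ x ∈ Set.Icc (0 : ℝ) (1 / 12),
      F x = (-2 - Real.sqrt (1 - 12 * x)
        + Real.sqrt (5 + 24 * x + 4 * Real.sqrt (1 - 12 * x))) / 6 := by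
  set G : ℝ → ℝ := fun x => 6 * F x + 2 + Real.sqrt (1 - 12 * x) with hG
  have hGc : ContinuousOn G (Set.Icc 0 (1 / 12)) := by
    apply ContinuousOn.add
    apply ContinuousOn.add
    · exact (continuousOn_const.mul hFc)
    · exact continuousOn_const
    · exact (Real.continuous_sqrt.comp (continuous_const.sub (continuous_const.mul continuous_id))).continuousOn
  have hGsq : ∀ x ∈ Set.Icc (0 : ℝ) (1 / 12),
      G x ^ 2 = 5 + 24 * x + 4 * Real.sqrt (1 - 12 * x) := by
    intro x hx
    have hs : Real.sqrt (1 - 12 * x) ^ 2 = 1 - 12 * x := by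
      rw [Real.sq_sqrt]; linarith [hx.2]
    have h := hF x hx
    simp only [hG]
    nlinarith [h, hs]
  have hGpos : ∀ x ∈ Set.Icc (0 : ℝ) (1 / 12), 0 < G x := by
    intro x hx
    have hG0 : G 0 = 3 := by
      simp [hG, hF0, Real.sqrt_one]; norm_num
    have hne : ∀ y ∈ Set.Icc (0 : ℝ) (1 / 12), G y ≠ 0 := by
      intro y hy h0
      have := hGsq y hy
      rw [h0] at this
      nlinarith [Real.sqrt_nonneg (1 - 12 * y), hy.1]
    by_contra hle
    push_neg at hle
    have hlt : G x < 0 := lt_of_le_of_ne hle (hne x hx)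
    have hsub : Set.Icc (0 : ℝ) x ⊆ Set.Icc 0 (1 / 12) :=
      Set.Icc_subset_Icc le_rfl hx.2
    have := intermediate_value_Icc' hx.1 (hGc.mono hsub)
    have h0mem : (0 : ℝ) ∈ Set.Icc (G x) (G 0) := by
      constructor <;> [linarith; linarith [hG0]]
    obtain ⟨y, hy, hGy⟩ := this h0mem
    exact hne y (hsub hy) hGy
  intro x hx
  have hD : 0 ≤ 5 + 24 * x + 4 * Real.sqrt (1 - 12 * x) := by
    nlinarith [Real.sqrt_nonneg (1 - 12 * x), hx.1]
  have : Real.sqrt (5 + 24 * x + 4 * Real.sqrt (1 - 12 * x)) = G x := by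
    rw [← hGsq x hx, Real.sqrt_sq (hGpos x hx).le]
  rw [this]
  simp only [hG]
  ring
end

section
/- For real x with 5 + 24x + 4√(1−12x) ≥ 0 and 0 ≤ x ≤ 1/12, the function F(x) = (−2 − √(1−12x) + √(5+24x+4√(1−12x)))/6 satisfies the quadratic functional equation F(x)² − 2F(x)U(x) + F(x) − x = 0 where U(x) = (1 − √(1−12x))/6; i.e., F = 2FU − F² + x. -/
open Real

/-- for `0 ≤ x ≤ 1/12` with `5 + 24x + 4√(1-12x) ≥ 0`, the function
`F x = (-2 - √(1-12x) + √(5+24x+4√(1-12x)))/6` satisfies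
`F² - 2FU + F - x = 0` (i.e. `F = 2FU - F² + x`), where `U x = (1 - √(1-12x))/6`. -/
theorem F_functional_equation :
    ∀ x : ℝ, 0 ≤ x → x ≤ 1 / 12 →
      0 ≤ 5 + 24 * x + 4 * Real.sqrt (1 - 12 * x) →
      (let F := (-2 - Real.sqrt (1 - 12 * x)
          + Real.sqrt (5 + 24 * x + 4 * Real.sqrt (1 - 12 * x))) / 6
       let U := (1 - Real.sqrt (1 - 12 * x)) / 6
       F ^ 2 - 2 * F * U + F - x = 0 ∧ F = 2 * F * U - F ^ 2 + x) := by
  intro x hx hx2 h5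
  have hs : Real.sqrt (1 - 12 * x) ^ 2 = 1 - 12 * x := Real.sq_sqrt (by linarith)
  have ht : Real.sqrt (5 + 24 * x + 4 * Real.sqrt (1 - 12 * x)) ^ 2
      = 5 + 24 * x + 4 * Real.sqrt (1 - 12 * x) := Real.sq_sqrt h5
  constructor
  · linear_combination (ht - hs) / 36
  · linear_combination (ht - hs) / 36
end
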